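/- Let Φ : ℝ → ℝ be bounded and Lipschitz continuous with M := sup_{x∈ℝ}|Φ(x)| > 0, differentiable at 0 with Φ'(0) > 1, and let λ(V) := 2M + V. Define for V > 0: I(V) := (1/V)·∫₀^V [ z·(2z + Φ(−z) − Φ(z)) ] / [ √(V²−z²)·(z − Φ(z) + λ(V))·(−z − Φ(−z) + λ(V)) ] dz. Then I is continuous on (0,∞) and there exists V̄ > 0 with I(V̄) = 0. -/

import Mathlib

/-!
Substituting `z = V sin θ` removes the square-root singularity: `I(V)` becomes the integral
over `[0, π/2]` of `sin θ · ψ(V sin θ) / (d(V sin θ) d(-V sin θ))`, where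
`ψ(z) = 2z + Φ(-z) - Φ(z)` and the factors `d(±z) = ±z - Φ(±z) + 2M + V` are at least `M`,
so it depends continuously on `V`.
Since `ψ(0) = 0` and `ψ'(0) = 2 - 2Φ'(0) < 0`, `ψ < 0` on some `(0, u)`, and the integral is
negative for `V < u`. For `V = 12M` the bound `ψ(z) ≥ 2z - 2M` makes the integrand at least
`-1/(24M)` everywhere, nonnegative from `θ = π/24` on and at least `1/(81M)` from `θ = π/4` on,
so the integral is positive. The intermediate value theorem gives the zero.
-/

open Set Filter MeasureTheory

/-- The matching functional
`I(V) = (1/V)·∫₀^V z(2z+Φ(−z)−Φ(z)) / (√(V²−z²)(z−Φ(z)+λ(V))(−z−Φ(−z)+λ(V))) dz`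
with `λ(V) = 2M + V`, whose zeros correspond to traveling wave velocities. -/
noncomputable def Ifun (Φ : ℝ → ℝ) (M V : ℝ) : ℝ :=
  (1/V) * ∫ z in (0:ℝ)..V, z * (2*z + Φ (-z) - Φ z) /
    (Real.sqrt (V^2 - z^2) * (z - Φ z + (2*M + V)) * (-z - Φ (-z) + (2*M + V)))

open Real Topology

noncomputable section

theorem integral_eq_integral_comp_mul_sin {E : Type*} [NormedAddCommGroup E] [NormedSpace ℝ E]
    {V : ℝ} (hV : 0 < V) (g : ℝ → E) :
    ∫ z in (0)..V, g z = ∫ θ in (0)..(π / 2), (V * cos θ) • g (V * sin θ) := by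
  have hmono : StrictMonoOn (fun θ => V * sin θ) (Icc 0 (π / 2)) := fun x hx y hy hxy =>
    mul_lt_mul_of_pos_left (strictMonoOn_sin ⟨by linarith [hx.1, pi_pos], hx.2⟩
      ⟨by linarith [hy.1, pi_pos], hy.2⟩ hxy) hV
  have himage : (fun θ => V * sin θ) '' Ioo 0 (π / 2) = Ioo 0 V := by
    rw [(by fun_prop : Continuous fun θ => V * sin θ).continuousOn.image_Ioo_of_strictMonoOn
      (by positivity) hmono]
    simp
  rw [intervalIntegral.integral_of_le hV.le, intervalIntegral.integral_of_le (by positivity),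
    integral_Ioc_eq_integral_Ioo, integral_Ioc_eq_integral_Ioo, ← himage,
    integral_image_eq_integral_abs_deriv_smul measurableSet_Ioo
      (fun θ _ => ((hasDerivAt_sin θ).const_mul V).hasDerivWithinAt)
      (hmono.injOn.mono Ioo_subset_Icc_self)]
  refine setIntegral_congr_fun measurableSet_Ioo fun θ hθ => ?_
  rw [abs_of_pos (mul_pos hV (cos_pos_of_mem_Ioo ⟨by linarith [hθ.1, pi_pos], hθ.2⟩))]

lemma two_div_le_sin {k θ : ℝ} (hk : 0 < k) (hθ : π / k ≤ θ) (hθ' : θ ≤ π / 2) :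
    2 / k ≤ sin θ :=
  calc 2 / k = 2 / π * (π / k) := by field_simp
    _ ≤ 2 / π * θ := by gcongr
    _ ≤ sin θ := mul_le_sin ((by positivity : 0 ≤ π / k).trans hθ) hθ'

lemma le_integral_of_piecewise_lower_bounds {g : ℝ → ℝ} {a b c d A B : ℝ} (hab : a ≤ b)
    (hbc : b ≤ c) (hcd : c ≤ d) (hg : IntervalIntegrable g volume a d)
    (h₁ : ∀ x ∈ Icc a b, A ≤ g x) (h₂ : ∀ x ∈ Icc b c, 0 ≤ g x)
    (h₃ : ∀ x ∈ Icc c d, B ≤ g x) :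
    (b - a) * A + (d - c) * B ≤ ∫ x in a..d, g x := by
  have hsub {x y : ℝ} (hx : x ∈ Icc a d) (hy : y ∈ Icc a d) :
      IntervalIntegrable g volume x y :=
    hg.mono_set (uIcc_subset_uIcc (Icc_subset_uIcc hx) (Icc_subset_uIcc hy))
  have ha : a ∈ Icc a d := left_mem_Icc.2 (hab.trans (hbc.trans hcd))
  have hb : b ∈ Icc a d := ⟨hab, hbc.trans hcd⟩
  have hc : c ∈ Icc a d := ⟨hab.trans hbc, hcd⟩
  have hd : d ∈ Icc a d := right_mem_Icc.2 (hab.trans (hbc.trans hcd))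
  have hI₁ : (b - a) * A ≤ ∫ x in a..b, g x := by
    simpa using intervalIntegral.integral_mono_on hab intervalIntegrable_const (hsub ha hb) h₁
  have hI₂ : 0 ≤ ∫ x in b..c, g x := intervalIntegral.integral_nonneg hbc h₂
  have hI₃ : (d - c) * B ≤ ∫ x in c..d, g x := by
    simpa using intervalIntegral.integral_mono_on hcd intervalIntegrable_const (hsub hc hd) h₃
  rw [← intervalIntegral.integral_add_adjacent_intervals (hsub ha hb) (hsub hb hd),
    ← intervalIntegral.integral_add_adjacent_intervals (hsub hb hc) (hsub hc hd)]
  linarith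

namespace TravelingWave

def psi (Φ : ℝ → ℝ) (z : ℝ) : ℝ := 2 * z + Φ (-z) - Φ z

def denomFactor (Φ : ℝ → ℝ) (M W z : ℝ) : ℝ := z - Φ z + (2 * M + W)

def kernel (Φ : ℝ → ℝ) (M V s : ℝ) : ℝ :=
  s * psi Φ (V * s) / (denomFactor Φ M V (V * s) * denomFactor Φ M V (-(V * s)))

/-- `Ifun` after the substitution `z = V sin θ`. The `|V|` keeps both denominator factors `≥ M`
for every `V`, so that the integrand is jointly continuous in `(V, θ)`. -/
def angularIntegral (Φ : ℝ → ℝ) (M V : ℝ) : ℝ :=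
  ∫ θ in (0)..(π / 2), kernel Φ M |V| (sin θ)

variable {Φ : ℝ → ℝ} {M : ℝ}

lemma le_denomFactor (hΦ : ∀ x, |Φ x| ≤ M) {W z : ℝ} (hz : |z| ≤ W) :
    M ≤ denomFactor Φ M W z := by
  have := abs_le.1 (hΦ z)
  have := abs_le.1 hz
  unfold denomFactor
  linarith

lemma sq_le_denomFactor_mul (hΦ : ∀ x, |Φ x| ≤ M) {W z : ℝ} (hz : |z| ≤ W) :
    M ^ 2 ≤ denomFactor Φ M W z * denomFactor Φ M W (-z) :=
  have hM : 0 ≤ M := (abs_nonneg _).trans (hΦ 0)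
  sq M ▸ mul_le_mul (le_denomFactor hΦ hz) (le_denomFactor hΦ (by rwa [abs_neg])) hM
    (hM.trans (le_denomFactor hΦ hz))

lemma denomFactor_mul_pos (hΦ : ∀ x, |Φ x| ≤ M) (hM : 0 < M) {V s : ℝ} (hV : 0 ≤ V)
    (hs : |s| ≤ 1) : 0 < denomFactor Φ M V (V * s) * denomFactor Φ M V (-(V * s)) :=
  (pow_pos hM 2).trans_le <| sq_le_denomFactor_mul hΦ <| by
    rw [abs_mul, abs_of_nonneg hV]
    exact mul_le_of_le_one_right hV hs

lemma two_mul_sub_le_psi (hΦ : ∀ x, |Φ x| ≤ M) (z : ℝ) : 2 * z - 2 * M ≤ psi Φ z := by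
  have := abs_le.1 (hΦ z)
  have := abs_le.1 (hΦ (-z))
  unfold psi
  linarith

lemma continuous_kernel_sin (hΦ : ∀ x, |Φ x| ≤ M) (hM : 0 < M) (hc : Continuous Φ) :
    Continuous (Function.uncurry fun V θ => kernel Φ M |V| (sin θ)) := by
  unfold kernel
  refine Continuous.div (by unfold psi; fun_prop) (by unfold denomFactor; fun_prop) fun p => ?_
  exact (denomFactor_mul_pos hΦ hM (abs_nonneg _) (abs_sin_le_one _)).ne'

lemma continuous_angularIntegral (hΦ : ∀ x, |Φ x| ≤ M) (hM : 0 < M) (hc : Continuous Φ) :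
    Continuous (angularIntegral Φ M) :=
  intervalIntegral.continuous_parametric_intervalIntegral_of_continuous'
    (continuous_kernel_sin hΦ hM hc) _ _

lemma Ifun_eq_angularIntegral {V : ℝ} (hV : 0 < V) : Ifun Φ M V = angularIntegral Φ M V := by
  rw [Ifun, integral_eq_integral_comp_mul_sin hV, ← intervalIntegral.integral_const_mul,
    angularIntegral, abs_of_pos hV]
  refine intervalIntegral.integral_congr_ae ?_
  filter_upwards [Measure.ae_ne volume (π / 2)] with θ hne hθ
  rw [uIoc_of_le (by positivity)] at hθ
  have hcos : 0 < cos θ :=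
    cos_pos_of_mem_Ioo ⟨by linarith [hθ.1, pi_pos], lt_of_le_of_ne hθ.2 hne⟩
  have hsqrt : √(V ^ 2 - (V * sin θ) ^ 2) = V * cos θ := by
    rw [← sqrt_sq (by positivity : 0 ≤ V * cos θ)]
    congr 1
    linear_combination -V ^ 2 * sin_sq_add_cos_sq θ
  rw [smul_eq_mul, hsqrt, kernel, psi, denomFactor, denomFactor]
  field_simp

lemma hasDerivAt_psi_zero {d : ℝ} (hd : HasDerivAt Φ d 0) :
    HasDerivAt (psi Φ) (2 - 2 * d) 0 := by
  have hneg : HasDerivAt (fun z => Φ (-z)) (-d) 0 := by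
    simpa [Function.comp_def] using (show HasDerivAt Φ d (-0) by simpa using hd).comp 0
      (hasDerivAt_id (0 : ℝ)).neg
  rw [show 2 - 2 * d = 2 * 1 + -d - d by ring]
  exact ((hasDerivAt_id (0 : ℝ)).const_mul 2 |>.add hneg).sub hd

lemma eventually_psi_neg {d : ℝ} (hd : HasDerivAt Φ d 0) (hd₁ : 1 < d) :
    ∀ᶠ z in 𝓝[>] 0, psi Φ z < 0 := by
  have hsign := eventually_nhdsWithin_sign_eq_of_deriv_neg
    ((hasDerivAt_psi_zero hd).deriv ▸ (by linarith : 2 - 2 * d < 0)) (by simp [psi])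
  filter_upwards [nhdsWithin_le_nhds hsign, self_mem_nhdsWithin] with z hz hz₀
  rwa [zero_sub, sign_neg (neg_neg_of_pos hz₀), sign_eq_neg_one_iff] at hz

lemma eventually_angularIntegral_neg (hΦ : ∀ x, |Φ x| ≤ M) (hM : 0 < M) (hc : Continuous Φ)
    {d : ℝ} (hd : HasDerivAt Φ d 0) (hd₁ : 1 < d) :
    ∀ᶠ V in 𝓝[>] 0, angularIntegral Φ M V < 0 := by
  obtain ⟨u, hu, hneg⟩ := mem_nhdsGT_iff_exists_Ioo_subset.1 (eventually_psi_neg hd hd₁)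
  filter_upwards [Ioo_mem_nhdsGT hu] with V hV
  have hcont : Continuous fun θ => kernel Φ M |V| (sin θ) :=
    (continuous_kernel_sin hΦ hM hc).comp₂ continuous_const continuous_id
  rw [← neg_pos, angularIntegral, ← intervalIntegral.integral_neg]
  refine intervalIntegral.intervalIntegral_pos_of_pos_on (hcont.neg.intervalIntegrable _ _)
    (fun θ hθ => ?_) (by positivity)
  have hsin : 0 < sin θ := sin_pos_of_pos_of_lt_pi hθ.1 (by linarith [hθ.2, pi_pos])
  have hz : V * sin θ ∈ Ioo 0 u :=
    ⟨mul_pos hV.1 hsin, (mul_le_of_le_one_right hV.1.le (sin_le_one θ)).trans_lt hV.2⟩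
  rw [abs_of_pos hV.1, neg_pos]
  exact div_neg_of_neg_of_pos (mul_neg_of_pos_of_neg hsin (hneg hz))
    (denomFactor_mul_pos hΦ hM hV.1.le (abs_sin_le_one θ))

lemma neg_inv_le_kernel_twelve (hΦ : ∀ x, |Φ x| ≤ M) (hM : 0 < M) {s : ℝ}
    (hs : s ∈ Icc (0 : ℝ) 1) :
    -(1 / (24 * M)) ≤ kernel Φ M (12 * M) s := by
  have hD := sq_le_denomFactor_mul hΦ (W := 12 * M) (z := 12 * M * s) <| by
    rw [abs_of_nonneg (by nlinarith [hs.1])]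
    nlinarith [hs.2]
  have hnum : -(M / 24) ≤ s * psi Φ (12 * M * s) := by
    nlinarith [mul_le_mul_of_nonneg_left (two_mul_sub_le_psi hΦ (12 * M * s)) hs.1,
      mul_nonneg hM.le (sq_nonneg (s - 1 / 24))]
  have hscale : -(1 / (24 * M)) * (M ^ 2) = -(M / 24) := by field_simp
  rw [kernel, le_div_iff₀ ((pow_pos hM 2).trans_le hD)]
  nlinarith [mul_le_mul_of_nonneg_left hD (by positivity : 0 ≤ 1 / (24 * M))]

lemma kernel_twelve_nonneg (hΦ : ∀ x, |Φ x| ≤ M) (hM : 0 < M) {s : ℝ}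
    (hs : s ∈ Icc (1 / 12 : ℝ) 1) :
    0 ≤ kernel Φ M (12 * M) s := by
  have hψ : 0 ≤ psi Φ (12 * M * s) := by
    nlinarith [two_mul_sub_le_psi hΦ (12 * M * s), hs.1]
  exact div_nonneg (mul_nonneg (by linarith [hs.1]) hψ)
    (denomFactor_mul_pos hΦ hM (by positivity) (abs_le.2 ⟨by linarith [hs.1], hs.2⟩)).le

lemma inv_le_kernel_twelve (hΦ : ∀ x, |Φ x| ≤ M) (hM : 0 < M) {s : ℝ}
    (hs : s ∈ Icc (1 / 2 : ℝ) 1) :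
    1 / (81 * M) ≤ kernel Φ M (12 * M) s := by
  have hD := denomFactor_mul_pos hΦ hM (V := 12 * M) (by positivity)
    (abs_le.2 ⟨by linarith [hs.1], hs.2⟩)
  have hΦ₁ := abs_le.1 (hΦ (12 * M * s))
  have hΦ₂ := abs_le.1 (hΦ (-(12 * M * s)))
  have hd₁ : denomFactor Φ M (12 * M) (12 * M * s) ≤ 27 * M := by
    unfold denomFactor; nlinarith [hs.2]
  have hd₂ : denomFactor Φ M (12 * M) (-(12 * M * s)) ≤ 9 * M := by
    unfold denomFactor; nlinarith [hs.1]
  have hd₂' : M ≤ denomFactor Φ M (12 * M) (-(12 * M * s)) :=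
    le_denomFactor hΦ (by rw [abs_neg, abs_of_nonneg (by nlinarith [hs.1])]; nlinarith [hs.2])
  have hDle := mul_le_mul hd₁ hd₂ (hM.le.trans hd₂') (by positivity)
  have hψ : 10 * M ≤ psi Φ (12 * M * s) := by
    nlinarith [two_mul_sub_le_psi hΦ (12 * M * s), hs.1]
  have hnum : 1 / 2 * (10 * M) ≤ s * psi Φ (12 * M * s) :=
    mul_le_mul hs.1 hψ (by positivity) (by linarith [hs.1])
  have hscale : 1 / (81 * M) * (27 * M * (9 * M)) = 3 * M := by field_simp; ring
  rw [kernel, le_div_iff₀ hD]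
  nlinarith [mul_le_mul_of_nonneg_left hDle (by positivity : 0 ≤ 1 / (81 * M))]

lemma angularIntegral_twelve_pos (hΦ : ∀ x, |Φ x| ≤ M) (hM : 0 < M) (hc : Continuous Φ) :
    0 < angularIntegral Φ M (12 * M) := by
  have hg : Continuous fun θ => kernel Φ M |12 * M| (sin θ) :=
    (continuous_kernel_sin hΦ hM hc).comp₂ continuous_const continuous_id
  rw [abs_of_pos (by positivity)] at hg
  rw [angularIntegral, abs_of_pos (by positivity)]
  refine lt_of_lt_of_le ?_ (le_integral_of_piecewise_lower_bounds (b := π / 24) (c := π / 4)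
    (by positivity) (by linarith [pi_pos]) (by linarith [pi_pos]) (hg.intervalIntegrable _ _)
    (fun θ hθ => neg_inv_le_kernel_twelve hΦ hM
      ⟨sin_nonneg_of_nonneg_of_le_pi hθ.1 (by linarith [hθ.2, pi_pos]), sin_le_one θ⟩)
    (fun θ hθ => kernel_twelve_nonneg hΦ hM
      ⟨by linarith [two_div_le_sin (k := 24) (by norm_num) hθ.1 (by linarith [hθ.2, pi_pos])],
        sin_le_one θ⟩)
    (fun θ hθ => inv_le_kernel_twelve hΦ hM
      ⟨by linarith [two_div_le_sin (k := 4) (by norm_num) hθ.1 hθ.2], sin_le_one θ⟩))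
  have : (π / 24 - 0) * -(1 / (24 * M)) + (π / 2 - π / 4) * (1 / (81 * M)) =
      π / M * (1 / 324 - 1 / 576) := by
    field_simp; ring
  rw [this]
  positivity

end TravelingWave

end

open TravelingWave in
/-- for bounded Lipschitz `Φ` with `M = sup|Φ| > 0`, differentiable at `0`
with `Φ'(0) > 1`, the matching functional `I` is continuous on `(0,∞)` and has a
zero `V̄ > 0` (the traveling wave velocity). -/
theorem stmt_14 (Φ : ℝ → ℝ) (M : ℝ) (K : NNReal) (hΦlip : LipschitzWith K Φ)
    (hbdd : BddAbove (Set.range fun x => |Φ x|))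
    (hM : M = ⨆ x, |Φ x|) (hMpos : 0 < M)
    (hdiff : DifferentiableAt ℝ Φ 0) (hder : 1 < deriv Φ 0) :
    ContinuousOn (fun V => Ifun Φ M V) (Ioi (0:ℝ)) ∧
    ∃ Vbar > 0, Ifun Φ M Vbar = 0 := by
  have hΦ : ∀ x, |Φ x| ≤ M := fun x => hM ▸ le_ciSup hbdd x
  have hc : Continuous Φ := hΦlip.continuous
  have hJ : Continuous (angularIntegral Φ M) := continuous_angularIntegral hΦ hMpos hc
  have hIJ : EqOn (Ifun Φ M) (angularIntegral Φ M) (Ioi 0) :=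
    fun _ hV => Ifun_eq_angularIntegral hV
  refine ⟨hJ.continuousOn.congr hIJ, ?_⟩
  obtain ⟨v, hv_neg, hv⟩ :=
    (eventually_angularIntegral_neg hΦ hMpos hc hdiff.hasDerivAt hder
      |>.and self_mem_nhdsWithin).exists
  obtain ⟨V, hV, hV_zero⟩ := intermediate_value_uIcc hJ.continuousOn
    (mem_uIcc_of_le hv_neg.le (angularIntegral_twelve_pos hΦ hMpos hc).le)
  have hV_pos : 0 < V := (lt_inf_iff.2 ⟨hv, by positivity⟩).trans_le hV.1
  exact ⟨V, hV_pos, (hIJ hV_pos).trans hV_zero⟩
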